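/- arXiv:1905.01413 — 2 statements merged into one kernel-verified Lean document; each statement's English description precedes it below -/
import Mathlib

section
/- Property I (Dirichlet racing representation): Let φ ∈ ℝ^C and π = (π₁,…,π_C) ~ Dir(1_C), the symmetric Dirichlet distribution with all concentration parameters equal to one. Then z := argmin_{i∈{1,…,C}} π_i e^{-φ_i} satisfies P(z = c) = σ(φ)_c, i.e., z ~ Cat(σ(φ)). -/
/-
Write `π = ε / ∑ ε` with `ε` iid `Exp(1)`. Dividing by the positive number `∑ ε` does not change
which coordinate strictly minimises `π i * exp (-φ i)`. Conditioning on `ε c = t`, coordinate `c`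
strictly wins with probability `∏_{j ≠ c} exp (-t exp (φ j - φ c))`, and integrating this against
`Exp(1)` gives `1 / ∑_j exp (φ j - φ c) = σ(φ)_c`. The strict-win events are disjoint, lie inside the
events `{z = c}`, and their probabilities add up to one; hence each `{z = c}` has the probability
of its strict-win event, and neither ties nor the tie-breaking of `argminF` have to be examined.
-/

open MeasureTheory ProbabilityTheory

/-- Tie-breaking argmin over `Fin C` (the argmin is a.s. unique in all statements below). -/
noncomputable def argminF {C : ℕ} [NeZero C] (v : Fin C → ℝ) : Fin C :=
  (Finset.exists_min_image Finset.univ v Finset.univ_nonempty).choose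

/-- The softmax function. -/
noncomputable def softmax {C : ℕ} (φ : Fin C → ℝ) (c : Fin C) : ℝ :=
  Real.exp (φ c) / ∑ i, Real.exp (φ i)

/-- The symmetric Dirichlet distribution `Dir(1_C)`, realized as normalized iid Exp(1). -/
noncomputable def dirichletOne (C : ℕ) : Measure (Fin C → ℝ) :=
  Measure.map (fun ε i => ε i / ∑ j, ε j) (Measure.pi fun _ => expMeasure 1)

/-- Pseudo action `z^{c⇌j}`: argmin after swapping coordinates `c` and `j` of `π`. -/
noncomputable def zswap {C : ℕ} [NeZero C] (φ π : Fin C → ℝ) (c j : Fin C) : Fin C :=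
  argminF (fun i => π (Equiv.swap c j i) * Real.exp (-φ i))

section

open Real Set

variable {C : ℕ}

namespace ProbabilityTheory

lemma expMeasure_Iic_zero {r : ℝ} (hr : 0 < r) : expMeasure r (Iic 0) = 0 := by
  have := isProbabilityMeasure_expMeasure hr
  rw [← ofReal_cdf, cdf_expMeasure_eq hr]
  simp

lemma ae_pos_expMeasure {r : ℝ} (hr : 0 < r) : ∀ᵐ t ∂expMeasure r, 0 < t := by
  rw [ae_iff]
  simp only [not_lt]
  exact expMeasure_Iic_zero hr

lemma expMeasure_Ioi {r a : ℝ} (hr : 0 < r) (ha : 0 ≤ a) :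
    expMeasure r (Ioi a) = ENNReal.ofReal (exp (-(r * a))) := by
  have := isProbabilityMeasure_expMeasure hr
  have hexp : 0 ≤ 1 - exp (-(r * a)) :=
    sub_nonneg.2 (exp_le_one_iff.2 (neg_nonpos.2 (mul_nonneg hr.le ha)))
  rw [← compl_Iic, prob_compl_eq_one_sub measurableSet_Iic, ← ofReal_cdf, cdf_expMeasure_eq hr,
    if_pos ha, ← ENNReal.ofReal_one, ← ENNReal.ofReal_sub _ hexp, sub_sub_cancel]

lemma lintegral_exp_neg_mul_expMeasure {r s : ℝ} (hr : 0 < r) (hs : 0 ≤ s) :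
    ∫⁻ t, ENNReal.ofReal (exp (-(s * t))) ∂expMeasure r = ENNReal.ofReal (r / (r + s)) := by
  have hdensity : ∀ t, exponentialPDF r t * ENNReal.ofReal (exp (-(s * t)))
      = ENNReal.ofReal (r / (r + s)) * exponentialPDF (r + s) t := by
    intro t
    rcases lt_or_ge t 0 with ht | ht
    · simp [exponentialPDF_of_neg ht]
    · rw [exponentialPDF_of_nonneg ht, exponentialPDF_of_nonneg ht,
        ← ENNReal.ofReal_mul (by positivity), ← ENNReal.ofReal_mul (by positivity)]
      congr 1
      rw [mul_assoc, ← exp_add, ← mul_assoc (r / (r + s)), div_mul_cancel₀ _ (by positivity)]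
      ring_nf
  have hpdf : ∀ q, Measurable (exponentialPDF q) :=
    fun q ↦ (measurable_exponentialPDFReal q).ennreal_ofReal
  rw [show expMeasure r = volume.withDensity (exponentialPDF r) from rfl,
    lintegral_withDensity_eq_lintegral_mul _ (hpdf r) (by fun_prop)]
  simp only [Pi.mul_apply, hdensity]
  rw [lintegral_const_mul _ (hpdf _),
    lintegral_exponentialPDF_eq_one (by positivity), mul_one]

end ProbabilityTheory

namespace MeasureTheory.Measure

lemma pi_eq_lintegral_insertNth {α : Type*} [MeasurableSpace α] (μ : Measure α) [SigmaFinite μ]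
    {n : ℕ} (c : Fin (n + 1)) {S : Set (Fin (n + 1) → α)} (hS : MeasurableSet S) :
    Measure.pi (fun _ ↦ μ) S
      = ∫⁻ t, Measure.pi (fun _ : Fin n ↦ μ) ((fun y ↦ c.insertNth t y) ⁻¹' S) ∂μ := by
  have e := (measurePreserving_piFinSuccAbove (fun _ : Fin (n + 1) ↦ μ) c).symm
  rw [← e.measure_preimage hS.nullMeasurableSet, Measure.prod_apply (hS.preimage e.measurable)]
  rfl

end MeasureTheory.Measure

lemma measure_preimage_singleton_eq_of_subset {X ι : Type*} [MeasurableSpace X] [Fintype ι]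
    {μ : Measure X} [IsProbabilityMeasure μ] (f : X → ι) {E : ι → Set X}
    (hE : ∀ i, MeasurableSet (E i)) (hEf : ∀ i, E i ⊆ f ⁻¹' {i}) (hsum : ∑ i, μ (E i) = 1)
    (i : ι) : μ (f ⁻¹' {i}) = μ (E i) := by
  have hdisj : Pairwise fun i j ↦ Disjoint (E i) (E j) := fun i j hij ↦
    ((disjoint_singleton.2 hij).preimage f).mono (hEf i) (hEf j)
  have hnull : μ (⋃ j, E j)ᶜ = 0 := by
    rw [prob_compl_eq_zero_iff (.iUnion hE), measure_iUnion hdisj hE, tsum_fintype, hsum]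
  have hcover : f ⁻¹' {i} ⊆ E i ∪ (⋃ j, E j)ᶜ := by
    intro x hx
    by_cases hxE : x ∈ ⋃ j, E j
    · obtain ⟨j, hj⟩ := mem_iUnion.1 hxE
      obtain rfl : j = i := (hEf j hj).symm.trans hx
      exact .inl hj
    · exact .inr hxE
  refine le_antisymm ?_ (measure_mono (hEf i))
  calc μ (f ⁻¹' {i}) ≤ μ (E i ∪ (⋃ j, E j)ᶜ) := measure_mono hcover
    _ ≤ μ (E i) + μ (⋃ j, E j)ᶜ := measure_union_le _ _
    _ = μ (E i) := by rw [hnull, add_zero]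

lemma argminF_eq_of_forall_lt [NeZero C] {v : Fin C → ℝ} {c : Fin C}
    (h : ∀ i ≠ c, v c < v i) : argminF v = c := by
  by_contra hne
  obtain ⟨-, hmin⟩ := (Finset.exists_min_image Finset.univ v Finset.univ_nonempty).choose_spec
  exact (h _ hne).not_ge (hmin c (Finset.mem_univ c))

lemma mul_exp_neg_lt_mul_exp_neg_iff (a b u v : ℝ) :
    a * exp (-u) < b * exp (-v) ↔ a * exp (v - u) < b := by
  rw [exp_neg v, ← div_eq_mul_inv, lt_div_iff₀ (exp_pos v), sub_eq_add_neg, add_comm, exp_add,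
    mul_assoc]

def strictArgminSet (φ : Fin C → ℝ) (c : Fin C) : Set (Fin C → ℝ) :=
  {x | ∀ i ≠ c, x c * exp (-φ c) < x i * exp (-φ i)}

lemma measurableSet_strictArgminSet (φ : Fin C → ℝ) (c : Fin C) :
    MeasurableSet (strictArgminSet φ c) := by
  simp only [strictArgminSet, Set.ofPred_forall]
  exact .iInter fun i ↦ .iInter fun _ ↦
    measurableSet_lt (by fun_prop) (by fun_prop)

lemma strictArgminSet_subset_argminF_eq [NeZero C] (φ : Fin C → ℝ) (c : Fin C) :
    strictArgminSet φ c ⊆ {x | argminF (fun i ↦ x i * exp (-φ i)) = c} :=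
  fun _ hx ↦ argminF_eq_of_forall_lt hx

lemma insertNth_preimage_strictArgminSet {n : ℕ} (φ : Fin (n + 1) → ℝ) (c : Fin (n + 1)) (t : ℝ) :
    (fun y ↦ c.insertNth t y) ⁻¹' strictArgminSet φ c
      = univ.pi fun j ↦ Ioi (t * exp (φ (c.succAbove j) - φ c)) := by
  ext y
  simp [strictArgminSet, Fin.forall_iff_succAbove c, mul_exp_neg_lt_mul_exp_neg_iff]

lemma pi_expMeasure_strictArgminSet [NeZero C] (φ : Fin C → ℝ) (c : Fin C) :
    Measure.pi (fun _ ↦ expMeasure 1) (strictArgminSet φ c) = ENNReal.ofReal (softmax φ c) := by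
  obtain ⟨n, rfl⟩ := Nat.exists_eq_add_one_of_ne_zero (NeZero.ne C)
  have := isProbabilityMeasure_expMeasure one_pos
  have hsoftmax : softmax φ c = 1 / (1 + ∑ j, exp (φ (c.succAbove j) - φ c)) := by
    have hsum : ∑ i, exp (φ i) = exp (φ c) * (1 + ∑ j, exp (φ (c.succAbove j) - φ c)) := by
      rw [Fin.sum_univ_succAbove _ c, mul_add, mul_one, Finset.mul_sum]
      simp only [← exp_add, add_sub_cancel]
    rw [softmax, hsum, div_mul_cancel_left₀ (exp_pos _).ne', one_div]
  set R := ∑ j, exp (φ (c.succAbove j) - φ c)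
  have hslice : ∀ t, 0 < t → Measure.pi (fun _ : Fin n ↦ expMeasure 1)
      ((fun y ↦ c.insertNth t y) ⁻¹' strictArgminSet φ c) = ENNReal.ofReal (exp (-(R * t))) := by
    intro t ht
    rw [insertNth_preimage_strictArgminSet, Measure.pi_pi]
    simp only [expMeasure_Ioi one_pos (by positivity : 0 ≤ t * exp _), one_mul]
    rw [← ENNReal.ofReal_prod_of_nonneg fun _ _ ↦ (exp_pos _).le, ← exp_sum, Finset.sum_mul,
      ← Finset.sum_neg_distrib]
    simp only [mul_comm t]
  rw [Measure.pi_eq_lintegral_insertNth _ c (measurableSet_strictArgminSet φ c),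
    lintegral_congr_ae ((ae_pos_expMeasure one_pos).mono hslice),
    lintegral_exp_neg_mul_expMeasure one_pos (by positivity), hsoftmax]

lemma sum_softmax [NeZero C] (φ : Fin C → ℝ) : ∑ c, softmax φ c = 1 := by
  simp only [softmax, ← Finset.sum_div]
  exact div_self (Finset.sum_pos (fun i _ ↦ exp_pos (φ i)) Finset.univ_nonempty).ne'

lemma div_mem_strictArgminSet_iff {φ : Fin C → ℝ} {c : Fin C} {x : Fin C → ℝ} {s : ℝ}
    (hs : 0 < s) : (fun i ↦ x i / s) ∈ strictArgminSet φ c ↔ x ∈ strictArgminSet φ c := by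
  simp only [strictArgminSet, mem_ofPred_eq, div_mul_eq_mul_div, div_lt_div_iff_of_pos_right hs]

lemma measurable_normalize : Measurable fun (ε : Fin C → ℝ) i ↦ ε i / ∑ j, ε j := by
  fun_prop

instance isProbabilityMeasure_dirichletOne : IsProbabilityMeasure (dirichletOne C) := by
  have := isProbabilityMeasure_expMeasure one_pos
  exact Measure.isProbabilityMeasure_map measurable_normalize.aemeasurable

lemma dirichletOne_strictArgminSet [NeZero C] (φ : Fin C → ℝ) (c : Fin C) :
    dirichletOne C (strictArgminSet φ c) = ENNReal.ofReal (softmax φ c) := by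
  have := isProbabilityMeasure_expMeasure one_pos
  have hpos : ∀ᵐ ε ∂Measure.pi (fun _ : Fin C ↦ expMeasure 1), 0 < ∑ j, ε j := by
    filter_upwards [ae_all_iff.2 fun i ↦
      Measure.tendsto_eval_ae_ae (i := i).eventually (ae_pos_expMeasure one_pos)] with ε hε
    exact Finset.sum_pos (fun j _ ↦ hε j) Finset.univ_nonempty
  rw [dirichletOne, Measure.map_apply measurable_normalize (measurableSet_strictArgminSet φ c),
    ← pi_expMeasure_strictArgminSet φ c]
  exact measure_congr (hpos.mono fun ε hε ↦ propext (div_mem_strictArgminSet_iff hε))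

end

theorem stmt3 {C : ℕ} [NeZero C] (φ : Fin C → ℝ) (c : Fin C) :
    (dirichletOne C) {π | argminF (fun i => π i * Real.exp (-φ i)) = c}
      = ENNReal.ofReal (softmax φ c) := by
  have hsum : ∑ d, dirichletOne C (strictArgminSet φ d) = 1 := by
    simp only [dirichletOne_strictArgminSet]
    rw [← ENNReal.ofReal_sum_of_nonneg fun d _ ↦ by unfold softmax; positivity, sum_softmax,
      ENNReal.ofReal_one]
  rw [← dirichletOne_strictArgminSet φ c]
  exact measure_preimage_singleton_eq_of_subset
    (fun x : Fin C → ℝ ↦ argminF fun i ↦ x i * Real.exp (-φ i))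
    (measurableSet_strictArgminSet φ) (strictArgminSet_subset_argminF_eq φ) hsum c
end

section
/- The ARS baseline has zero expectation: for any fixed reference j ∈ {1,…,C}, E_{π~Dir(1_C)}[(1/C) Σ_{c=1}^C f(z^{c⇌j})·(1 - C·π_j)] = 0, where z^{c⇌j} := argmin_i π_i^{c⇌j} e^{-φ_i}. -/
open MeasureTheory ProbabilityTheory

/-!
Swapping the coordinates `c` and `j` of `π` preserves `Dir(1_C)` and turns
`f (z^{c⇌j}) (1 - C π_j)` into `f z (1 - C π_c)`, where `z = argmin_i π_i e^{-φ_i}`.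
Summing over `c`, the expectation becomes `E[f z ∑_c (1 - C π_c)]`, and the weight vanishes
on the simplex. The argmin is a.s. unique, since a ratio of two independent exponential
coordinates has no atoms; this is what makes `f z` measurable.
-/

instance (r : ℝ) : NullSingletonClass (expMeasure r) :=
  ⟨fun _ => withDensity_absolutelyContinuous _ _ (measure_singleton _)⟩

instance : IsProbabilityMeasure (expMeasure 1) := isProbabilityMeasure_expMeasure one_pos

lemma ae_pos_expMeasure (r : ℝ) : ∀ᵐ x ∂expMeasure r, 0 < x := by
  have hnonneg : ∀ᵐ x ∂expMeasure r, 0 ≤ x := by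
    rw [ae_iff, expMeasure, gammaMeasure]
    simp only [not_le]
    change (_ : Measure ℝ) (Set.Iio 0) = 0
    rw [withDensity_apply _ measurableSet_Iio]
    exact lintegral_gammaPDF_of_nonpos le_rfl
  filter_upwards [hnonneg, Measure.ae_ne _ 0] with x h0 hx using h0.lt_of_ne' hx

lemma ae_pi_pos_expMeasure {ι : Type*} [Fintype ι] :
    ∀ᵐ ε ∂Measure.pi fun _ : ι => expMeasure 1, ∀ i, 0 < ε i :=
  Measure.ae_pi_le_pi (Filter.eventually_pi fun _ => ae_pos_expMeasure 1)

lemma ae_pi_ne_mul {ι : Type*} [Fintype ι] {ν : Measure ℝ} [IsProbabilityMeasure ν]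
    [NullSingletonClass ν] {k k' : ι} (hk : k ≠ k') (r : ℝ) :
    ∀ᵐ ε ∂Measure.pi fun _ : ι => ν, ε k ≠ r * ε k' := by
  have hind : IndepFun (fun ε : ι → ℝ => ε k') (fun ε => ε k) (Measure.pi fun _ => ν) :=
    (iIndepFun_pi (X := fun _ x => x) fun _ => aemeasurable_id).indepFun hk.symm
  rw [indepFun_iff_map_prod_eq_prod_map_map (measurable_pi_apply k').aemeasurable
    (measurable_pi_apply k).aemeasurable, (measurePreserving_eval _ k).map_eq,
    (measurePreserving_eval _ k').map_eq] at hind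
  have hmeas : MeasurableSet {p : ℝ × ℝ | p.2 ≠ r * p.1} :=
    (measurableSet_eq_fun measurable_snd (measurable_fst.const_mul r)).compl
  have hprod : ∀ᵐ p ∂ν.prod ν, p.2 ≠ r * p.1 :=
    (Measure.ae_prod_iff_ae_ae hmeas).2 (.of_forall fun x => Measure.ae_ne ν (r * x))
  rwa [← hind, ae_map_iff (by fun_prop) hmeas] at hprod

section argminF

variable {C : ℕ} [NeZero C]

lemma argminF_le (v : Fin C → ℝ) (k : Fin C) : v (argminF v) ≤ v k :=
  (Finset.exists_min_image Finset.univ v Finset.univ_nonempty).choose_spec.2 k (Finset.mem_univ k)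

lemma argminF_eq_iff {v : Fin C → ℝ} (hv : Function.Injective v) (i : Fin C) :
    argminF v = i ↔ ∀ k, v i ≤ v k :=
  ⟨fun h => h ▸ argminF_le v, fun h => hv (le_antisymm (argminF_le v i) (h _))⟩

lemma aemeasurable_argminF {α : Type*} [MeasurableSpace α] {μ : Measure α}
    {v : α → Fin C → ℝ} (hv : Measurable v)
    (hinj : ∀ᵐ a ∂μ, Function.Injective (v a)) :
    AEMeasurable (fun a => argminF (v a)) μ := by
  refine NullMeasurable.aemeasurable (measurable_to_countable' fun i => ?_)
  have hmin : MeasurableSet {a | ∀ k, v a i ≤ v a k} :=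
    Set.ofPred_forall _ ▸ .iInter fun k => measurableSet_le (by fun_prop) (by fun_prop)
  refine hmin.nullMeasurableSet.congr ?_
  filter_upwards [hinj] with a ha
  exact propext (argminF_eq_iff ha i).symm

end argminF

namespace dirichletOne

variable {C : ℕ}

lemma measurable_normalize : Measurable fun (ε : Fin C → ℝ) i => ε i / ∑ j, ε j := by
  fun_prop

instance : IsProbabilityMeasure (dirichletOne C) :=
  Measure.isProbabilityMeasure_map measurable_normalize.aemeasurable

lemma measurePreserving_comp_perm (σ : Equiv.Perm (Fin C)) :
    MeasurePreserving (fun (π : Fin C → ℝ) i => π (σ i))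
      (dirichletOne C) (dirichletOne C) := by
  let e : (Fin C → ℝ) ≃ᵐ (Fin C → ℝ) :=
    MeasurableEquiv.arrowCongr' σ.symm (.refl ℝ)
  have hpi : MeasurePreserving e (Measure.pi fun _ => expMeasure 1)
      (Measure.pi fun _ => expMeasure 1) :=
    measurePreserving_arrowCongr' _ _ σ.symm (.refl ℝ) fun _ => .id _
  have hcomm : e ∘ (fun (ε : Fin C → ℝ) i => ε i / ∑ j, ε j)
      = (fun (ε : Fin C → ℝ) i => ε i / ∑ j, ε j) ∘ e := by
    funext ε i
    simp [e, MeasurableEquiv.arrowCongr', Equiv.arrowCongr', Equiv.sum_comp]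
  change MeasurePreserving e _ _
  refine ⟨e.measurable, ?_⟩
  rw [dirichletOne, Measure.map_map e.measurable measurable_normalize, hcomm,
    ← Measure.map_map measurable_normalize e.measurable, hpi.map_eq]

lemma measurableEmbedding_comp_perm (σ : Equiv.Perm (Fin C)) :
    MeasurableEmbedding fun (π : Fin C → ℝ) i => π (σ i) :=
  (MeasurableEquiv.arrowCongr' σ.symm (.refl ℝ)).measurableEmbedding

lemma integral_comp_perm (σ : Equiv.Perm (Fin C)) (g : (Fin C → ℝ) → ℝ) :
    ∫ π, g (fun i => π (σ i)) ∂dirichletOne C = ∫ π, g π ∂dirichletOne C :=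
  (measurePreserving_comp_perm σ).integral_comp (measurableEmbedding_comp_perm σ) g

lemma integrable_comp_perm_iff (σ : Equiv.Perm (Fin C)) {g : (Fin C → ℝ) → ℝ} :
    Integrable (fun π => g fun i => π (σ i)) (dirichletOne C) ↔
      Integrable g (dirichletOne C) :=
  (measurePreserving_comp_perm σ).integrable_comp_emb (measurableEmbedding_comp_perm σ)

lemma ae_mem_stdSimplex [NeZero C] :
    ∀ᵐ π ∂dirichletOne C, π ∈ stdSimplex ℝ (Fin C) := by
  refine (ae_map_iff (p := (· ∈ stdSimplex ℝ (Fin C))) measurable_normalize.aemeasurable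
    (isClosed_stdSimplex ℝ (Fin C)).measurableSet).2 ?_
  filter_upwards [ae_pi_pos_expMeasure] with ε hε
  have hsum : 0 < ∑ j, ε j := Finset.sum_pos (fun i _ => hε i) Finset.univ_nonempty
  exact ⟨fun i => div_nonneg (hε i).le hsum.le, by rw [← Finset.sum_div, div_self hsum.ne']⟩

lemma ae_ne_mul {k k' : Fin C} (hk : k ≠ k') (r : ℝ) :
    ∀ᵐ π ∂dirichletOne C, π k ≠ r * π k' := by
  refine (ae_map_iff (p := fun π : Fin C → ℝ => π k ≠ r * π k')
    measurable_normalize.aemeasurable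
    (measurableSet_eq_fun (by fun_prop) (by fun_prop)).compl).2 ?_
  filter_upwards [ae_pi_pos_expMeasure, ae_pi_ne_mul hk r] with ε hε hne
  have hsum : 0 < ∑ j, ε j := Finset.sum_pos (fun i _ => hε i) ⟨k, Finset.mem_univ k⟩
  rwa [mul_div_assoc', Ne, div_left_inj' hsum.ne']

lemma ae_injective_mul {w : Fin C → ℝ} (hw : ∀ i, w i ≠ 0) :
    ∀ᵐ π ∂dirichletOne C, Function.Injective fun i => π i * w i := by
  have hall : ∀ᵐ π ∂dirichletOne C, ∀ k k', k ≠ k' → π k ≠ w k' / w k * π k' := by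
    refine ae_all_iff.2 fun k => ae_all_iff.2 fun k' => ?_
    by_cases hk : k = k'
    · exact .of_forall fun _ h => absurd hk h
    · filter_upwards [ae_ne_mul hk (w k' / w k)] with π hπ using fun _ => hπ
  filter_upwards [hall] with π hπ k k' heq
  by_contra hk
  refine hπ k k' hk ?_
  rw [div_mul_eq_mul_div, eq_div_iff (hw k)]
  linarith [heq]

lemma integrable_mul_one_sub [NeZero C] {g : (Fin C → ℝ) → ℝ}
    (hg : AEStronglyMeasurable g (dirichletOne C)) {M : ℝ} (hM : ∀ π, ‖g π‖ ≤ M)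
    (c : Fin C) :
    Integrable (fun π => g π * (1 - C * π c)) (dirichletOne C) := by
  have hmeas : Measurable fun π : Fin C → ℝ => 1 - C * π c := by fun_prop
  refine Integrable.bdd_mul (Integrable.of_bound hmeas.aestronglyMeasurable (1 + C) ?_) hg
    (.of_forall hM)
  filter_upwards [ae_mem_stdSimplex] with π hπ
  have h0 := hπ.1 c
  have h1 : π c ≤ 1 := hπ.2 ▸ Finset.single_le_sum (fun i _ => hπ.1 i) (Finset.mem_univ c)
  rw [Real.norm_eq_abs, abs_le]
  constructor <;> nlinarith [(Nat.cast_nonneg C : (0 : ℝ) ≤ C)]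

end dirichletOne

section baseline

open dirichletOne

variable {C : ℕ} [NeZero C] (φ f : Fin C → ℝ)

lemma integrable_comp_argminF_mul_one_sub (c : Fin C) :
    Integrable (fun π => f (argminF fun i => π i * Real.exp (-φ i)) * (1 - C * π c))
      (dirichletOne C) := by
  have hmeas : AEMeasurable (fun π => argminF fun i => π i * Real.exp (-φ i)) (dirichletOne C) :=
    aemeasurable_argminF (by fun_prop) (ae_injective_mul fun i => (Real.exp_pos _).ne')
  refine integrable_mul_one_sub
    ((measurable_of_finite f).comp_aemeasurable hmeas).aestronglyMeasurable
    (M := ∑ i, ‖f i‖) (fun _ => ?_) c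
  exact Finset.single_le_sum (fun i _ => norm_nonneg (f i)) (Finset.mem_univ _)

lemma integrable_zswap_mul_one_sub (c j : Fin C) :
    Integrable (fun π => f (zswap φ π c j) * (1 - C * π j)) (dirichletOne C) := by
  simpa [zswap] using
    (integrable_comp_perm_iff (Equiv.swap c j)).2 (integrable_comp_argminF_mul_one_sub φ f c)

lemma integral_zswap_mul_one_sub (c j : Fin C) :
    ∫ π, f (zswap φ π c j) * (1 - C * π j) ∂dirichletOne C =
      ∫ π, f (argminF fun i => π i * Real.exp (-φ i)) * (1 - C * π c) ∂dirichletOne C := by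
  simpa [zswap] using integral_comp_perm (Equiv.swap c j)
    fun π => f (argminF fun i => π i * Real.exp (-φ i)) * (1 - C * π c)

end baseline

open dirichletOne in
theorem stmt12 {C : ℕ} [NeZero C] (φ f : Fin C → ℝ) (j : Fin C) :
    ∫ π, ((1 / C) * ∑ c, f (zswap φ π c j)) * (1 - C * π j) ∂(dirichletOne C) = 0 := by
  calc _ = (1 / C) * ∑ c, ∫ π, f (zswap φ π c j) * (1 - C * π j) ∂dirichletOne C := by
        rw [← integral_finsetSum _ fun c _ => integrable_zswap_mul_one_sub φ f c j,
          ← integral_const_mul]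
        simp_rw [mul_assoc, Finset.sum_mul]
    _ = (1 / C) * ∑ c, ∫ π, f (argminF fun i => π i * Real.exp (-φ i)) * (1 - C * π c)
          ∂dirichletOne C := by
        simp_rw [integral_zswap_mul_one_sub]
    _ = (1 / C) * ∫ π, f (argminF fun i => π i * Real.exp (-φ i)) * ∑ c, (1 - C * π c)
          ∂dirichletOne C := by
        rw [← integral_finsetSum _ fun c _ => integrable_comp_argminF_mul_one_sub φ f c]
        simp_rw [Finset.mul_sum]
    _ = 0 := by
        rw [integral_eq_zero_of_ae, mul_zero]
        filter_upwards [ae_mem_stdSimplex] with π hπ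
        simp [Finset.sum_sub_distrib, ← Finset.mul_sum, hπ.2]
end
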